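/- There exist absolute constants c, C > 0 such that the following holds. Let 0 < σ < 1/2 and let 0 < δ < 1 satisfy 2δ^{1-σ} ≤ 1 and δ^{1-σ} ≤ 1/40. Let p, q be natural numbers with p ≤ (1/40)δ^{σ-1} and q ≤ (1/80)δ^{2σ-1}, and set s = pδ^{-σ}, t = 2qδ^{-2σ}. Then c δ^{1-σ} ≤ |∫_0^1 e^{-πit ξ² + 2πi s ξ} g(ξ) dξ| ≤ C δ^{1-σ}. -/

import Mathlib

open Real MeasureTheory

/-!
The parameters are tuned to the comb `g`: at every tooth centre `ℓ δ^σ` the phase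
`-π t ξ² + 2π s ξ` equals `2π (p ℓ - q ℓ²)`, and across a tooth of half-width `δ` it moves by at
most `2π δ (s + t) ≤ π / 3`. So the real part of the integrand is at least `g / 2`, and the
integral is comparable to `∫₀¹ g`, which is about `δ^{-σ}` teeth of mass between `δ` and `2δ`.
-/

/-- The function `g = ∑_{ℓ ∈ ℕ, 1 ≤ ℓ ≤ δ^{-σ}} χ_{(ℓδ^σ-δ, ℓδ^σ+δ)}` from Section 2. -/
noncomputable def g (δ σ : ℝ) (x : ℝ) : ℝ :=
  ∑ ℓ ∈ Finset.Icc 1 ⌊δ ^ (-σ)⌋₊,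
    Set.indicator (Set.Ioo ((ℓ : ℝ) * δ ^ σ - δ) ((ℓ : ℝ) * δ ^ σ + δ)) (fun _ => (1 : ℝ)) x

section NormIntegral

variable {α : Type*} [MeasurableSpace α] {μ : Measure α} {F : α → ℂ} {w : α → ℝ}

theorem norm_integral_mul_le_integral (hw : Integrable w μ) (hw0 : 0 ≤ᵐ[μ] w)
    (hF1 : ∀ᵐ x ∂μ, ‖F x‖ ≤ 1) : ‖∫ x, F x * w x ∂μ‖ ≤ ∫ x, w x ∂μ := by
  refine norm_integral_le_of_norm_le hw ?_
  filter_upwards [hw0, hF1] with x hx hFx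
  rw [norm_mul, Complex.norm_real, Real.norm_of_nonneg hx]
  exact mul_le_of_le_one_left hx hFx

theorem mul_integral_le_norm_integral_mul {a : ℝ} (hw : Integrable w μ) (hw0 : 0 ≤ᵐ[μ] w)
    (hF : AEStronglyMeasurable F μ) (hF1 : ∀ᵐ x ∂μ, ‖F x‖ ≤ 1)
    (hre : ∀ᵐ x ∂μ, w x ≠ 0 → a ≤ (F x).re) :
    a * ∫ x, w x ∂μ ≤ ‖∫ x, F x * w x ∂μ‖ := by
  have hFw : Integrable (fun x => F x * w x) μ := hw.ofReal.bdd_mul hF hF1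
  calc a * ∫ x, w x ∂μ = ∫ x, a * w x ∂μ := (integral_const_mul a _).symm
    _ ≤ ∫ x, (F x).re * w x ∂μ := by
      refine integral_mono_ae (hw.const_mul a) ?_ ?_
      · simpa only [RCLike.re_to_complex, Complex.re_mul_ofReal] using hFw.re
      filter_upwards [hw0, hre] with x hx hax
      rcases eq_or_ne (w x) 0 with h0 | h0
      · simp [h0]
      · exact mul_le_mul_of_nonneg_right (hax h0) hx
    _ = (∫ x, F x * w x ∂μ).re := by
      simpa only [RCLike.re_to_complex, Complex.re_mul_ofReal] using integral_re hFw
    _ ≤ ‖∫ x, F x * w x ∂μ‖ := Complex.re_le_norm _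

end NormIntegral

theorem half_le_cos_of_abs_sub_int_mul_two_pi_le {θ : ℝ} {k : ℤ}
    (hθ : |θ - k * (2 * π)| ≤ π / 3) : 1 / 2 ≤ cos θ := by
  have hcos : cos θ = cos |θ - k * (2 * π)| := by
    rw [cos_abs, cos_sub_int_mul_two_pi]
  rw [hcos, ← cos_pi_div_three]
  exact cos_le_cos_of_nonneg_of_le_pi (abs_nonneg _) (by linarith [pi_pos]) hθ

theorem half_le_natFloor {x : ℝ} (hx : 1 ≤ x) : x / 2 ≤ ⌊x⌋₊ := by
  rcases le_or_gt x 2 with h | h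
  · have : (1 : ℝ) ≤ ⌊x⌋₊ := by exact_mod_cast Nat.le_floor (by exact_mod_cast hx)
    linarith
  · linarith [Nat.sub_one_lt_floor x]

theorem integrable_indicator_Ioo_one (a b : ℝ) :
    Integrable (Set.indicator (Set.Ioo a b) (fun _ => (1 : ℝ))) :=
  (integrableOn_const measure_Ioo_lt_top.ne).integrable_indicator measurableSet_Ioo

theorem setIntegral_Ioc_indicator_Ioo_mem_Icc {c δ : ℝ} (hδ : 0 ≤ δ) (hδc : δ ≤ c) (hc : c ≤ 1) :
    ∫ x in Set.Ioc 0 1, Set.indicator (Set.Ioo (c - δ) (c + δ)) (fun _ => (1 : ℝ)) x ∈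
      Set.Icc δ (2 * δ) := by
  rw [setIntegral_indicator measurableSet_Ioo, setIntegral_const, smul_eq_mul, mul_one]
  constructor
  · have hsub : Set.Ioo (c - δ) c ⊆ Set.Ioc 0 1 ∩ Set.Ioo (c - δ) (c + δ) := fun x hx =>
      ⟨⟨by linarith [hx.1], by linarith [hx.2]⟩, hx.1, by linarith [hx.2]⟩
    calc δ = volume.real (Set.Ioo (c - δ) c) := by rw [Real.volume_real_Ioo_of_le] <;> linarith
      _ ≤ _ := measureReal_mono hsub
        ((measure_mono Set.inter_subset_left).trans_lt measure_Ioc_lt_top).ne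
  · calc _ ≤ volume.real (Set.Ioo (c - δ) (c + δ)) := measureReal_mono Set.inter_subset_right
          measure_Ioo_lt_top.ne
      _ = 2 * δ := by rw [Real.volume_real_Ioo_of_le] <;> linarith

noncomputable def comb (h δ : ℝ) (x : ℝ) : ℝ :=
  ∑ ℓ ∈ Finset.Icc 1 ⌊h⁻¹⌋₊,
    Set.indicator (Set.Ioo ((ℓ : ℝ) * h - δ) ((ℓ : ℝ) * h + δ)) (fun _ => (1 : ℝ)) x

theorem g_eq_comb {δ : ℝ} (hδ : 0 ≤ δ) (σ : ℝ) : g δ σ = comb (δ ^ σ) δ := by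
  funext x
  rw [g, comb, rpow_neg hδ]

section Comb

variable {h δ : ℝ}

theorem comb_nonneg (x : ℝ) : 0 ≤ comb h δ x :=
  Finset.sum_nonneg fun _ _ => Set.indicator_nonneg (fun _ _ => zero_le_one) x

theorem integrable_comb : Integrable (comb h δ) :=
  integrable_finsetSum _ fun _ _ => integrable_indicator_Ioo_one _ _

theorem exists_mem_Ioo_of_comb_ne_zero {x : ℝ} (hx : comb h δ x ≠ 0) :
    ∃ ℓ ∈ Finset.Icc 1 ⌊h⁻¹⌋₊, x ∈ Set.Ioo ((ℓ : ℝ) * h - δ) ((ℓ : ℝ) * h + δ) := by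
  by_contra! hnot
  exact hx (Finset.sum_eq_zero fun ℓ hℓ => Set.indicator_of_notMem (hnot ℓ hℓ) _)

theorem natCast_mul_le_one_of_mem_Icc (hh : 0 < h) {ℓ : ℕ} (hℓ : ℓ ∈ Finset.Icc 1 ⌊h⁻¹⌋₊) :
    (ℓ : ℝ) * h ≤ 1 := by
  have hℓN : (ℓ : ℝ) ≤ h⁻¹ :=
    (Nat.cast_le.2 (Finset.mem_Icc.1 hℓ).2).trans (Nat.floor_le (inv_nonneg.2 hh.le))
  calc (ℓ : ℝ) * h ≤ h⁻¹ * h := by gcongr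
    _ = 1 := inv_mul_cancel₀ hh.ne'

theorem setIntegral_Ioc_comb_mem_Icc (hδ : 0 < δ) (hδh : δ ≤ h) (h1 : h ≤ 1) :
    ∫ x in Set.Ioc 0 1, comb h δ x ∈ Set.Icc (δ / (2 * h)) (2 * δ / h) := by
  have hh : 0 < h := hδ.trans_le hδh
  set N := ⌊h⁻¹⌋₊
  have hN_low : h⁻¹ / 2 ≤ N := half_le_natFloor ((one_le_inv₀ hh).2 h1)
  have hN_up : (N : ℝ) ≤ h⁻¹ := Nat.floor_le (inv_nonneg.2 hh.le)
  have hbump : ∀ ℓ ∈ Finset.Icc 1 N, ∫ x in Set.Ioc 0 1,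
      Set.indicator (Set.Ioo ((ℓ : ℝ) * h - δ) (ℓ * h + δ)) (fun _ => (1 : ℝ)) x ∈
        Set.Icc δ (2 * δ) := fun ℓ hℓ =>
    setIntegral_Ioc_indicator_Ioo_mem_Icc hδ.le
      (hδh.trans (le_mul_of_one_le_left hh.le (by exact_mod_cast (Finset.mem_Icc.1 hℓ).1)))
      (natCast_mul_le_one_of_mem_Icc hh hℓ)
  have hcard : (Finset.Icc 1 N).card = N := by simp
  unfold comb
  rw [integral_finsetSum _ fun _ _ => (integrable_indicator_Ioo_one _ _).integrableOn]
  constructor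
  · calc δ / (2 * h) = h⁻¹ / 2 * δ := by ring
      _ ≤ N * δ := by gcongr
      _ ≤ _ := by
        simpa [hcard] using Finset.card_nsmul_le_sum _ _ δ fun ℓ hℓ => (hbump ℓ hℓ).1
  · calc _ ≤ N * (2 * δ) := by
          simpa [hcard] using Finset.sum_le_card_nsmul _ _ (2 * δ) fun ℓ hℓ => (hbump ℓ hℓ).2
      _ ≤ h⁻¹ * (2 * δ) := by gcongr
      _ = 2 * δ / h := by ring

end Comb

noncomputable def quadPhase (s t ξ : ℝ) : ℝ := -(π * t * ξ ^ 2) + 2 * π * s * ξ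

theorem quadPhase_natCast_mul {h : ℝ} (hh : h ≠ 0) (p q ℓ : ℕ) :
    quadPhase (p / h) (2 * q / h ^ 2) (ℓ * h) = ((p * ℓ - q * ℓ ^ 2 : ℤ) : ℝ) * (2 * π) := by
  rw [quadPhase]
  field_simp
  push_cast
  ring

theorem abs_quadPhase_sub_le {s t ξ c : ℝ} (hs : 0 ≤ s) (ht : 0 ≤ t)
    (hξ : ξ ∈ Set.Icc (0 : ℝ) 1) (hc : c ∈ Set.Icc (0 : ℝ) 1) :
    |quadPhase s t ξ - quadPhase s t c| ≤ 2 * π * (s + t) * |ξ - c| := by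
  have hfactor : quadPhase s t ξ - quadPhase s t c = π * (2 * s - t * (ξ + c)) * (ξ - c) := by
    rw [quadPhase, quadPhase]; ring
  have hsum : |2 * s - t * (ξ + c)| ≤ 2 * (s + t) := by
    rw [abs_le]
    constructor <;> nlinarith [hξ.1, hξ.2, hc.1, hc.2]
  rw [hfactor, abs_mul, abs_mul, abs_of_pos pi_pos]
  calc π * |2 * s - t * (ξ + c)| * |ξ - c| ≤ π * (2 * (s + t)) * |ξ - c| := by gcongr
    _ = 2 * π * (s + t) * |ξ - c| := by ring

theorem half_le_cos_quadPhase_of_comb_ne_zero {h δ ξ : ℝ} {p q : ℕ} (hh : 0 < h)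
    (hst : δ * (p / h + 2 * q / h ^ 2) ≤ 1 / 6) (hξ : ξ ∈ Set.Icc (0 : ℝ) 1)
    (hcomb : comb h δ ξ ≠ 0) : 1 / 2 ≤ cos (quadPhase (p / h) (2 * q / h ^ 2) ξ) := by
  obtain ⟨ℓ, hℓ, hξℓ⟩ := exists_mem_Ioo_of_comb_ne_zero hcomb
  refine half_le_cos_of_abs_sub_int_mul_two_pi_le (k := p * ℓ - q * ℓ ^ 2) ?_
  have hc : (ℓ : ℝ) * h ∈ Set.Icc (0 : ℝ) 1 := ⟨by positivity, natCast_mul_le_one_of_mem_Icc hh hℓ⟩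
  have hdist : |ξ - ℓ * h| ≤ δ := abs_le.2 ⟨by linarith [hξℓ.1], by linarith [hξℓ.2]⟩
  rw [← quadPhase_natCast_mul hh.ne']
  calc _ ≤ 2 * π * (p / h + 2 * q / h ^ 2) * |ξ - ℓ * h| :=
        abs_quadPhase_sub_le (by positivity) (by positivity) hξ hc
    _ ≤ 2 * π * (p / h + 2 * q / h ^ 2) * δ := by gcongr
    _ = 2 * π * (δ * (p / h + 2 * q / h ^ 2)) := by ring
    _ ≤ 2 * π * (1 / 6) := by gcongr
    _ = π / 3 := by ring

theorem norm_integral_exp_quadPhase_mul_comb_mem_Icc {h δ : ℝ} {p q : ℕ} (hδ : 0 < δ)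
    (hδh : δ ≤ h) (h1 : h ≤ 1) (hst : δ * (p / h + 2 * q / h ^ 2) ≤ 1 / 6) :
    ‖∫ ξ in (0 : ℝ)..1,
        Complex.exp ((quadPhase (p / h) (2 * q / h ^ 2) ξ : ℂ) * Complex.I) * (comb h δ ξ : ℂ)‖ ∈
      Set.Icc (δ / (4 * h)) (2 * δ / h) := by
  have hh : 0 < h := hδ.trans_le hδh
  obtain ⟨hlow, hup⟩ := setIntegral_Ioc_comb_mem_Icc hδ hδh h1
  have hcomb : IntegrableOn (comb h δ) (Set.Ioc 0 1) := integrable_comb.integrableOn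
  have hcomb0 : 0 ≤ᵐ[volume.restrict (Set.Ioc 0 1)] comb h δ :=
    Filter.Eventually.of_forall comb_nonneg
  have hnorm : ∀ᵐ ξ ∂volume.restrict (Set.Ioc (0 : ℝ) 1),
      ‖Complex.exp ((quadPhase (p / h) (2 * q / h ^ 2) ξ : ℂ) * Complex.I)‖ ≤ 1 :=
    Filter.Eventually.of_forall fun ξ => (Complex.norm_exp_ofReal_mul_I _).le
  rw [intervalIntegral.integral_of_le zero_le_one]
  constructor
  · calc δ / (4 * h) = 1 / 2 * (δ / (2 * h)) := by ring
      _ ≤ 1 / 2 * ∫ ξ in Set.Ioc 0 1, comb h δ ξ := by gcongr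
      _ ≤ _ := by
        refine mul_integral_le_norm_integral_mul hcomb hcomb0
          (Continuous.aestronglyMeasurable (by unfold quadPhase; fun_prop)) hnorm ?_
        filter_upwards [ae_restrict_mem measurableSet_Ioc] with ξ hξ hξ0
        rw [Complex.exp_ofReal_mul_I_re]
        exact half_le_cos_quadPhase_of_comb_ne_zero hh hst (Set.Ioc_subset_Icc_self hξ) hξ0
  · exact (norm_integral_mul_le_integral hcomb hcomb0 hnorm).trans hup

theorem stmt3 :
    ∃ c C : ℝ, 0 < c ∧ 0 < C ∧
      ∀ σ δ : ℝ, 0 < σ → σ < 1/2 → 0 < δ → δ < 1 →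
        2 * δ ^ (1 - σ) ≤ 1 → δ ^ (1 - σ) ≤ 1/40 →
        ∀ p q : ℕ, (p : ℝ) ≤ (1/40) * δ ^ (σ - 1) → (q : ℝ) ≤ (1/80) * δ ^ (2*σ - 1) →
        ∀ s t : ℝ, s = (p : ℝ) * δ ^ (-σ) → t = 2 * (q : ℝ) * δ ^ (-(2*σ)) →
          c * δ ^ (1 - σ) ≤
            ‖(∫ ξ in (0:ℝ)..1,
              Complex.exp (((-(π * t * ξ ^ 2) + 2 * π * s * ξ : ℝ) : ℂ) * Complex.I)
                * (g δ σ ξ : ℂ))‖ ∧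
          ‖(∫ ξ in (0:ℝ)..1,
              Complex.exp (((-(π * t * ξ ^ 2) + 2 * π * s * ξ : ℝ) : ℂ) * Complex.I)
                * (g δ σ ξ : ℂ))‖ ≤ C * δ ^ (1 - σ) := by
  refine ⟨1 / 4, 2, by norm_num, by norm_num, ?_⟩
  intro σ δ hσ hσ2 hδ hδ1 _ _ p q hp hq s t hs ht
  set h := δ ^ σ
  have hh : 0 < h := rpow_pos_of_pos hδ σ
  have hδh : δ ≤ h := by
    simpa using rpow_le_rpow_of_exponent_ge hδ hδ1.le (by linarith : σ ≤ 1)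
  have h1 : h ≤ 1 := rpow_le_one hδ.le hδ1.le hσ.le
  have hsq : δ ^ (2 * σ) = h ^ 2 := by rw [mul_comm, rpow_mul hδ.le, rpow_two]
  rw [rpow_neg hδ.le, ← div_eq_mul_inv] at hs
  rw [rpow_neg hδ.le, hsq, ← div_eq_mul_inv] at ht
  rw [rpow_sub hδ, rpow_one] at hp
  rw [rpow_sub hδ, rpow_one, hsq] at hq
  have hst : δ * (p / h + 2 * q / h ^ 2) ≤ 1 / 6 :=
    calc δ * (p / h + 2 * q / h ^ 2) = δ / h * p + 2 * δ / h ^ 2 * q := by ring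
      _ ≤ δ / h * (1 / 40 * (h / δ)) + 2 * δ / h ^ 2 * (1 / 80 * (h ^ 2 / δ)) := by gcongr
      _ = 1 / 20 := by field_simp; norm_num
      _ ≤ 1 / 6 := by norm_num
  obtain ⟨hlow, hup⟩ := norm_integral_exp_quadPhase_mul_comb_mem_Icc hδ hδh h1 hst
  rw [rpow_sub hδ, rpow_one, g_eq_comb hδ.le, hs, ht]
  constructor
  · calc 1 / 4 * (δ / h) = δ / (4 * h) := by ring
      _ ≤ _ := hlow
  · exact hup.trans_eq (by ring)
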